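/- Variance theorem: let (X, R, I) be a finite unital regular relation partition with v = #X, and g : X → ℂ be (v, k, λ)-equi-distributed. Then (Σ_x g(x))·conj(Σ_x g(x)) − Σ_x g(x)·conj(g(x)) = λ(v − 1). -/

import Mathlib

/-!
Expand `(Σ g)·conj(Σ g)` as a sum over all pairs `(x, x')` and group the pairs by their relation
class. The unit class is the diagonal and contributes `Σ g·conj g`; every other class `i` contributes
`(A_i g, g) = λ · #R⁻¹({i}) / v`, and these cardinalities add up to `v² − v`.
-/

open Finset

noncomputable section RelPart

/-- A relation partition `(X, R, I)` is unital with unit `i₀` if `R⁻¹({i₀})` is the diagonal. -/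
def IsUnital {X I : Type*} (R : X × X → I) (i₀ : I) : Prop :=
  ∀ p : X × X, R p = i₀ ↔ p.1 = p.2

/-- A relation partition is regular if every relation class has constant out- and in-valency. -/
def IsRegularRP {X I : Type*} (R : X × X → I) : Prop :=
  ∀ i : I, ∃ k : ℕ, ∀ x : X,
    Nat.card {x' : X // R (x, x') = i} = k ∧ Nat.card {x' : X // R (x', x) = i} = k

/-- The cardinality `#R⁻¹({i})` of the `i`-th relation. -/
def relCard {X I : Type*} (R : X × X → I) (i : I) : ℕ :=
  Nat.card {p : X × X // R p = i}

open scoped Classical in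
/-- `(A_i g)(x') = Σ_x A_i(x, x') g(x)` for the adjacency matrix `A_i` of `R⁻¹({i})`. -/
def adjApply {X I : Type*} [Fintype X] (R : X × X → I) (i : I) (g : X → ℂ) : X → ℂ :=
  fun x' => ∑ x : X, if R (x, x') = i then g x else 0

/-- The standard Hermitian product `(u, w) = Σ_x u(x) conj(w(x))`. -/
def herm {X : Type*} [Fintype X] (u w : X → ℂ) : ℂ :=
  ∑ x : X, u x * (starRingEnd ℂ) (w x)

/-- The `i`-th inner distribution `λ_i = v · (A_i g, g) / #R⁻¹({i})`. -/
def innerDist {X I : Type*} [Fintype X] (R : X × X → I) (i : I) (g : X → ℂ) : ℂ :=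
  (Fintype.card X : ℂ) * herm (adjApply R i g) g / (relCard R i : ℂ)

/-- `g` is `(v, k, λ)`-equi-distributed: mass `k` and `λ_i = λ` for all `i ≠ i₀`. -/
def IsEquiDist {X I : Type*} [Fintype X] (R : X × X → I) (i₀ : I) (g : X → ℂ)
    (k lam : ℂ) : Prop :=
  (∑ x : X, g x) = k ∧ ∀ i : I, i ≠ i₀ → innerDist R i g = lam

open scoped Classical in
/-- The pushout `f_*g(y) = Σ_{x ∈ f⁻¹(y)} g(x)`. -/
def pushf {X Y : Type*} [Fintype X] (f : X → Y) (g : X → ℂ) : Y → ℂ :=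
  fun y => ∑ x : X, if f x = y then g x else 0

end RelPart

section VarianceTheorem

open scoped Classical

variable {X I : Type*} [Fintype X] (R : X × X → I)

theorem herm_adjApply_eq_sum_filter (i : I) (g : X → ℂ) :
    herm (adjApply R i g) g = ∑ p with R p = i, g p.1 * (starRingEnd ℂ) (g p.2) := by
  rw [sum_filter, Fintype.sum_prod_type]
  simp only [herm, adjApply, sum_mul, ite_mul, zero_mul]
  exact sum_comm

theorem sum_mul_conj_sum_eq_sum_herm_adjApply (g : X → ℂ) :
    (∑ x, g x) * (starRingEnd ℂ) (∑ x, g x)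
      = ∑ i ∈ univ.image R, herm (adjApply R i g) g := by
  rw [map_sum, sum_mul_sum, ← Fintype.sum_prod_type',
    ← sum_fiberwise_of_maps_to (fun p _ => mem_image_of_mem R (mem_univ p))]
  simp only [herm_adjApply_eq_sum_filter]

theorem relCard_eq_card_filter (i : I) : relCard R i = #{p | R p = i} := by
  rw [relCard, Nat.card_eq_fintype_card, Fintype.card_subtype]

theorem relCard_ne_zero_of_mem_image {i : I} (hi : i ∈ univ.image R) : relCard R i ≠ 0 := by
  obtain ⟨p, -, rfl⟩ := mem_image.mp hi
  rw [relCard_eq_card_filter]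
  exact card_ne_zero_of_mem (mem_filter.mpr ⟨mem_univ p, rfl⟩)

theorem sum_relCard_image : ∑ i ∈ univ.image R, relCard R i = Fintype.card X * Fintype.card X := by
  simp only [relCard_eq_card_filter]
  rw [← card_eq_sum_card_fiberwise (fun p _ => mem_image_of_mem R (mem_univ p)),
    card_univ, Fintype.card_prod]

variable {R} {i₀ : I}

theorem IsUnital.relCard_eq (hu : IsUnital R i₀) : relCard R i₀ = Fintype.card X := by
  rw [relCard_eq_card_filter, filter_congr (fun p _ => hu p)]
  simpa [diag_eq_filter] using diag_card (univ : Finset X)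

theorem IsUnital.herm_adjApply_eq (hu : IsUnital R i₀) (g : X → ℂ) :
    herm (adjApply R i₀ g) g = ∑ x, g x * (starRingEnd ℂ) (g x) := by
  simp [herm, adjApply, hu _]

theorem IsUnital.sum_erase_relCard (hu : IsUnital R i₀) (hi₀ : i₀ ∈ univ.image R) :
    ∑ i ∈ (univ.image R).erase i₀, (relCard R i : ℂ)
      = Fintype.card X * Fintype.card X - Fintype.card X := by
  have h := congrArg (Nat.cast (R := ℂ)) (sum_relCard_image R)
  rw [Nat.cast_sum, ← add_sum_erase _ _ hi₀, hu.relCard_eq] at h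
  push_cast at h
  exact eq_sub_of_add_eq' h

theorem herm_adjApply_eq_of_innerDist_eq {i : I} {g : X → ℂ} {lam : ℂ}
    (h : innerDist R i g = lam) (hi : relCard R i ≠ 0) (hX : Fintype.card X ≠ 0) :
    herm (adjApply R i g) g = lam * relCard R i / Fintype.card X := by
  rw [← h, innerDist]
  field_simp

end VarianceTheorem

theorem variance_theorem_general {X I : Type*} [Fintype X]
    (R : X × X → I) (hR : Function.Surjective R)
    (i₀ : I) (hu : IsUnital R i₀)
    (g : X → ℂ) (k lam : ℂ)
    (hg : IsEquiDist R i₀ g k lam) :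
    (∑ x : X, g x) * (starRingEnd ℂ) (∑ x : X, g x)
        - ∑ x : X, g x * (starRingEnd ℂ) (g x)
      = lam * ((Fintype.card X : ℂ) - 1) := by
  classical
  obtain ⟨p₀, hp₀⟩ := hR i₀
  have : Nonempty X := ⟨p₀.1⟩
  have hX : Fintype.card X ≠ 0 := Fintype.card_ne_zero
  set S := univ.image R
  have hi₀ : i₀ ∈ S := hp₀ ▸ mem_image_of_mem R (mem_univ p₀)
  have hoff : ∑ i ∈ S.erase i₀, herm (adjApply R i g) g
      = lam / Fintype.card X * ∑ i ∈ S.erase i₀, (relCard R i : ℂ) := by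
    rw [mul_sum]
    refine sum_congr rfl fun i hi => ?_
    rw [herm_adjApply_eq_of_innerDist_eq (hg.2 i (ne_of_mem_erase hi))
      (relCard_ne_zero_of_mem_image R (mem_of_mem_erase hi)) hX]
    ring
  rw [sum_mul_conj_sum_eq_sum_herm_adjApply, ← add_sum_erase S _ hi₀,
    hu.herm_adjApply_eq, hoff, hu.sum_erase_relCard hi₀]
  field_simp
  ring

/-- Variance theorem: for a `(v, k, λ)`-equi-distributed `g` on a finite
unital regular relation partition, `(Σ g)·conj(Σ g) − Σ g·conj g = λ(v − 1)`. -/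
theorem variance_theorem {X I : Type*} [Fintype X]
    (R : X × X → I) (hR : Function.Surjective R)
    (i₀ : I) (hu : IsUnital R i₀) (hreg : IsRegularRP R)
    (g : X → ℂ) (k lam : ℂ)
    (hg : IsEquiDist R i₀ g k lam) :
    (∑ x : X, g x) * (starRingEnd ℂ) (∑ x : X, g x)
        - ∑ x : X, g x * (starRingEnd ℂ) (g x)
      = lam * ((Fintype.card X : ℂ) - 1) :=
  variance_theorem_general R hR i₀ hu g k lam hg
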